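/- For |q|<1 and every nonnegative integer n, Σ_{r∈ℤ} (1-q^{6r+1}) q^{(9r^2-3r)/2} / ((q;q)_{n-3r} (q;q)_{n+3r+1}) = (-1;q^3)_n / ((q;q)_{2n} (-1;q)_n), where terms with n-3r < 0 vanish (interpreting 1/(q;q)_m = 0 for m < 0), and the right side is 1 when n = 0. -/

import Mathlib

open Complex

noncomputable def qPoch (a q : ℂ) (n : ℕ) : ℂ := ∏ j ∈ Finset.range n, (1 - a * q ^ j)

noncomputable def qPochInf (a q : ℂ) : ℂ := ∏' j : ℕ, (1 - a * q ^ j)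

noncomputable def invPoch (q : ℂ) (m : ℤ) : ℂ := if m < 0 then 0 else (qPoch q q m.toNat)⁻¹

/-!
Both sides satisfy the recurrence
`F (n + 1) * (1 - q ^ (2n+1)) * (1 - q ^ (2n+2)) * (1 + q ^ n) = F n * (1 + q ^ (3n))`
and equal `1` at `n = 0`. For the right side this is immediate. For the left side it is creative
telescoping: the summand `t n r` satisfies
`t n r * (1 + q ^ (3n)) - t (n + 1) r * (1 - q ^ (2n+1)) * (1 - q ^ (2n+2)) * (1 + q ^ n)
  = G n (r + 1) - G n r`
for an explicit certificate `G`, and summing over `r` kills the right side because `G n` has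
finite support. As `1 / (q;q)_(m-1) = (1 - q ^ m) / (q;q)_m` holds for every integer `m` under
the convention `1 / (q;q)_m = 0` for `m < 0`, the termwise identity is a single rational identity
in `q`, `q ^ n`, `q ^ r`, with no boundary cases.
-/

lemma tsum_sub_shift_eq_zero {α : Type*} [AddCommGroup α] [TopologicalSpace α]
    [IsTopologicalAddGroup α] [T2Space α] {G : ℤ → α} (hG : G.HasFiniteSupport) :
    ∑' r, (G (r + 1) - G r) = 0 := by
  have hG' : Summable G := summable_of_hasFiniteSupport hG
  have hshift : Summable fun r => G (r + 1) :=
    (Equiv.addRight (1 : ℤ)).summable_iff.2 hG'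
  rw [hshift.tsum_sub hG', sub_eq_zero]
  exact (Equiv.addRight 1).tsum_eq G

lemma eq_of_mul_succ_eq {M : Type*} [MonoidWithZero M] [IsCancelMulZero M] {S R c d : ℕ → M}
    (hc : ∀ n, c n ≠ 0) (hS : ∀ n, S (n + 1) * c n = S n * d n)
    (hR : ∀ n, R (n + 1) * c n = R n * d n) (h0 : S 0 = R 0) (n : ℕ) : S n = R n := by
  induction n with
  | zero => exact h0
  | succ n ih => exact mul_right_cancel₀ (hc n) (by rw [hS, hR, ih])

lemma nine_sq_sub_three_div_two_succ (r : ℤ) :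
    (9 * (r + 1) ^ 2 - 3 * (r + 1)) / 2 = (9 * r ^ 2 - 3 * r) / 2 + (9 * r + 3) := by
  rw [show 9 * (r + 1) ^ 2 - 3 * (r + 1) = 9 * r ^ 2 - 3 * r + (9 * r + 3) * 2 by ring,
    Int.add_mul_ediv_right _ _ two_ne_zero]

lemma ne_one_of_norm_lt_one {z : ℂ} (hz : ‖z‖ < 1) : z ≠ 1 := by
  rintro rfl
  simp at hz

lemma one_sub_mul_pow_ne_zero {a q : ℂ} (ha : ‖a‖ ≤ 1) (ha1 : a ≠ 1) (hq : ‖q‖ < 1) (j : ℕ) :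
    1 - a * q ^ j ≠ 0 := by
  rcases j.eq_zero_or_pos with rfl | hj
  · simpa [sub_eq_zero] using ha1.symm
  · refine sub_ne_zero.2 fun h => ?_
    have : ‖a * q ^ j‖ < 1 := by
      rw [norm_mul, norm_pow]
      exact lt_of_le_of_lt (mul_le_of_le_one_left (by positivity) ha)
        (pow_lt_one₀ (norm_nonneg q) hq hj.ne')
    simp [← h] at this

lemma qPoch_ne_zero {a q : ℂ} (ha : ‖a‖ ≤ 1) (ha1 : a ≠ 1) (hq : ‖q‖ < 1) (n : ℕ) :
    qPoch a q n ≠ 0 :=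
  Finset.prod_ne_zero_iff.2 fun j _ => one_sub_mul_pow_ne_zero ha ha1 hq j

lemma qPoch_succ (a q : ℂ) (n : ℕ) : qPoch a q (n + 1) = qPoch a q n * (1 - a * q ^ n) :=
  Finset.prod_range_succ _ _

lemma invPoch_of_neg (q : ℂ) {m : ℤ} (h : m < 0) : invPoch q m = 0 := if_pos h

lemma invPoch_zero (q : ℂ) : invPoch q 0 = 1 := by
  simp [invPoch, qPoch]

lemma invPoch_sub_one {q : ℂ} (hq : ‖q‖ < 1) (m : ℤ) :
    invPoch q (m - 1) = (1 - q ^ m) * invPoch q m := by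
  rcases lt_trichotomy m 0 with hm | rfl | hm
  · rw [invPoch_of_neg q hm, invPoch_of_neg q (by omega), mul_zero]
  · rw [invPoch_of_neg q (by norm_num), zpow_zero, sub_self, zero_mul]
  · obtain ⟨k, rfl⟩ : ∃ k : ℕ, m = (k + 1 : ℕ) := ⟨m.toNat - 1, by omega⟩
    have hk := one_sub_mul_pow_ne_zero hq.le (ne_one_of_norm_lt_one hq) hq k
    have hpred : invPoch q ((k + 1 : ℕ) - 1) = (qPoch q q k)⁻¹ := by simp [invPoch]
    have hsucc : invPoch q (k + 1 : ℕ) = (qPoch q q (k + 1))⁻¹ := by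
      rw [invPoch, if_neg (by omega), Int.toNat_natCast]
    rw [hpred, hsucc, zpow_natCast, qPoch_succ, pow_succ', mul_inv, mul_left_comm,
      mul_inv_cancel₀ hk, mul_one]

lemma invPoch_sub_three {q : ℂ} (hq : ‖q‖ < 1) (m : ℤ) :
    invPoch q (m - 3) = (1 - q ^ (m - 2)) * (1 - q ^ (m - 1)) * (1 - q ^ m) * invPoch q m := by
  rw [show m - 3 = m - 1 - 1 - 1 by ring, invPoch_sub_one hq, invPoch_sub_one hq,
    invPoch_sub_one hq, show m - 1 - 1 = m - 2 by ring]
  ring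

noncomputable def sumTerm (q : ℂ) (n : ℕ) (r : ℤ) : ℂ :=
  (1 - q ^ (6 * r + 1)) * q ^ ((9 * r ^ 2 - 3 * r) / 2) *
    invPoch q ((n : ℤ) - 3 * r) * invPoch q ((n : ℤ) + 3 * r + 1)

noncomputable def sumCert (q : ℂ) (n : ℕ) (r : ℤ) : ℂ :=
  q ^ ((9 * r ^ 2 - 3 * r) / 2) * (q ^ (3 * r) + q) * q ^ ((n : ℤ) - 3 * r) *
    invPoch q ((n : ℤ) + 1 - 3 * r) * invPoch q ((n : ℤ) + 3 * r - 1)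

lemma sumTerm_sub_sumTerm_succ {q : ℂ} (hq : ‖q‖ < 1) (hq0 : q ≠ 0) (n : ℕ) (r : ℤ) :
    sumTerm q n r * (1 + q ^ (3 * n)) -
      sumTerm q (n + 1) r * ((1 - q ^ (2 * n + 1)) * (1 - q ^ (2 * n + 2)) * (1 + q ^ n)) =
    sumCert q n (r + 1) - sumCert q n r := by
  -- Express every `invPoch` through `invPoch q (n + 1 - 3 * r)` or `invPoch q (n + 3 * r + 2)`.
  have hU1 : invPoch q ((n : ℤ) - 3 * r) =
      (1 - q ^ ((n : ℤ) + 1 - 3 * r)) * invPoch q ((n : ℤ) + 1 - 3 * r) := by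
    rw [← invPoch_sub_one hq]; congr 1; omega
  have hU3 : invPoch q ((n : ℤ) + 1 - 3 * (r + 1)) = invPoch q ((n : ℤ) + 1 - 3 * r - 3) := by
    congr 1; omega
  have hV1 : invPoch q ((n : ℤ) + 3 * r + 1) =
      (1 - q ^ ((n : ℤ) + 3 * r + 2)) * invPoch q ((n : ℤ) + 3 * r + 2) := by
    rw [← invPoch_sub_one hq]; congr 1; omega
  have hV3 : invPoch q ((n : ℤ) + 3 * r - 1) = invPoch q ((n : ℤ) + 3 * r + 2 - 3) := by
    congr 1; omega
  have hV : invPoch q ((n : ℤ) + 3 * (r + 1) - 1) = invPoch q ((n : ℤ) + 3 * r + 2) := by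
    congr 1; omega
  have hV' : invPoch q ((n : ℤ) + 1 + 3 * r + 1) = invPoch q ((n : ℤ) + 3 * r + 2) := by
    congr 1; omega
  simp only [sumTerm, sumCert, Nat.cast_succ, hU1, hU3, hV1, hV3, hV, hV', invPoch_sub_three hq,
    nine_sq_sub_three_div_two_succ, zpow_add₀ hq0, zpow_sub₀ hq0, zpow_mul', zpow_natCast,
    zpow_ofNat]
  field_simp
  ring

lemma sumTerm_eq_zero (q : ℂ) {n : ℕ} {r : ℤ} (h : (n : ℤ) < 3 * r ∨ (n : ℤ) + 3 * r + 1 < 0) :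
    sumTerm q n r = 0 := by
  rcases h with h | h
  · rw [sumTerm, invPoch_of_neg q (by omega), mul_zero, zero_mul]
  · rw [sumTerm, invPoch_of_neg q h, mul_zero]

lemma sumCert_eq_zero (q : ℂ) {n : ℕ} {r : ℤ} (h : (n : ℤ) + 1 < 3 * r ∨ (n : ℤ) + 3 * r < 1) :
    sumCert q n r = 0 := by
  rcases h with h | h
  · rw [sumCert, invPoch_of_neg q (by omega), mul_zero, zero_mul]
  · rw [sumCert, invPoch_of_neg q (m := (n : ℤ) + 3 * r - 1) (by omega), mul_zero]

lemma sumTerm_hasFiniteSupport (q : ℂ) (n : ℕ) : (sumTerm q n).HasFiniteSupport :=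
  (Set.finite_Icc (-(n : ℤ)) n).subset fun r hr =>
    by_contra fun h => hr (sumTerm_eq_zero q (by simp only [Set.mem_Icc] at h; omega))

lemma sumCert_hasFiniteSupport (q : ℂ) (n : ℕ) : (sumCert q n).HasFiniteSupport :=
  (Set.finite_Icc (-(n : ℤ)) (n + 1)).subset fun r hr =>
    by_contra fun h => hr (sumCert_eq_zero q (by simp only [Set.mem_Icc] at h; omega))

lemma tsum_sumTerm_zero {q : ℂ} (hq : ‖q‖ < 1) : ∑' r, sumTerm q 0 r = 1 := by
  rw [tsum_eq_single 0 fun r hr => sumTerm_eq_zero q (by omega)]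
  have h := invPoch_sub_one hq 1
  rw [sub_self, invPoch_zero] at h
  simpa [sumTerm, invPoch_zero] using h.symm

lemma tsum_sumTerm_succ {q : ℂ} (hq : ‖q‖ < 1) (hq0 : q ≠ 0) (n : ℕ) :
    (∑' r, sumTerm q (n + 1) r) * ((1 - q ^ (2 * n + 1)) * (1 - q ^ (2 * n + 2)) * (1 + q ^ n)) =
    (∑' r, sumTerm q n r) * (1 + q ^ (3 * n)) := by
  rw [eq_comm, ← sub_eq_zero, ← tsum_mul_right, ← tsum_mul_right,
    ← (summable_of_hasFiniteSupport _).tsum_sub (summable_of_hasFiniteSupport _)]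
  · simp only [sumTerm_sub_sumTerm_succ hq hq0]
    exact tsum_sub_shift_eq_zero (sumCert_hasFiniteSupport q n)
  · exact (sumTerm_hasFiniteSupport q n).mul_left _
  · exact (sumTerm_hasFiniteSupport q (n + 1)).mul_left _

noncomputable def sumValue (q : ℂ) (n : ℕ) : ℂ :=
  qPoch (-1) (q ^ 3) n / (qPoch q q (2 * n) * qPoch (-1) q n)

lemma sumValue_zero (q : ℂ) : sumValue q 0 = 1 := by
  simp [sumValue, qPoch]

lemma sumValue_succ {q : ℂ} (hq : ‖q‖ < 1) (n : ℕ) :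
    sumValue q (n + 1) * ((1 - q ^ (2 * n + 1)) * (1 - q ^ (2 * n + 2)) * (1 + q ^ n)) =
    sumValue q n * (1 + q ^ (3 * n)) := by
  have hq1 := ne_one_of_norm_lt_one hq
  have hB (m : ℕ) := qPoch_ne_zero hq.le hq1 hq m
  have hC (m : ℕ) := qPoch_ne_zero (a := -1) (by simp) (by norm_num) hq m
  rw [sumValue, sumValue, div_mul_eq_mul_div, div_mul_eq_mul_div,
    div_eq_div_iff (mul_ne_zero (hB _) (hC _)) (mul_ne_zero (hB _) (hC _)),
    show 2 * (n + 1) = 2 * n + 1 + 1 by ring, qPoch_succ, qPoch_succ, qPoch_succ, qPoch_succ]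
  ring

theorem stmt16 (q : ℂ) (hq : ‖q‖ < 1) (hq0 : q ≠ 0) (n : ℕ) :
    ∑' r : ℤ, (1 - q ^ (6 * r + 1)) * q ^ ((9 * r ^ 2 - 3 * r) / 2) *
      invPoch q ((n : ℤ) - 3 * r) * invPoch q ((n : ℤ) + 3 * r + 1) =
    qPoch (-1) (q ^ 3) n / (qPoch q q (2 * n) * qPoch (-1) q n) := by
  have hq1 := ne_one_of_norm_lt_one hq
  have hcoeff (m : ℕ) : (1 - q ^ (2 * m + 1)) * (1 - q ^ (2 * m + 2)) * (1 + q ^ m) ≠ 0 := by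
    have h1 := one_sub_mul_pow_ne_zero hq.le hq1 hq (2 * m)
    have h2 := one_sub_mul_pow_ne_zero hq.le hq1 hq (2 * m + 1)
    have h3 := one_sub_mul_pow_ne_zero (a := -1) (by simp) (by norm_num) hq m
    rw [← pow_succ'] at h1 h2
    rw [neg_one_mul, sub_neg_eq_add] at h3
    exact mul_ne_zero (mul_ne_zero h1 h2) h3
  exact eq_of_mul_succ_eq (S := fun n => ∑' r, sumTerm q n r) (R := sumValue q) hcoeff
    (tsum_sumTerm_succ hq hq0) (sumValue_succ hq) (by rw [tsum_sumTerm_zero hq, sumValue_zero]) n
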